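/- arXiv:1708.09605 — 2 statements merged into one kernel-verified Lean document; each statement's English description precedes it below -/
import Mathlib

section
/- Let S_n be a one-dimensional random walk with i.i.d. increments X_i satisfying E[X] < 0, and suppose ν := sup{t ∈ R : E[exp(t·X)] ≤ 1} > 0. Then for every x ≥ 0, P(sup_{n ≥ 1} S_n ≥ x) ≤ e^{−ν x}. -/
/-!
Fix `0 ≤ t` with `m := E[exp (t X)] ≤ 1`. The partial products of the independent mean-one
variables `exp (t Xᵢ) / m` form a nonnegative martingale which dominates `exp (t Sₙ)`, because
`m ≤ 1`. Ville's maximal inequality bounds the probability that this martingale ever reaches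
`exp (t x)` by `exp (-t x)`. Letting `t` increase to `ν` gives the theorem.
-/

open MeasureTheory ProbabilityTheory Finset Filter

namespace ProbabilityTheory

variable {Ω : Type*} {mΩ : MeasurableSpace Ω} {μ : Measure Ω} {Y : ℕ → Ω → ℝ}

lemma iIndepFun.integrable_prod_range [IsProbabilityMeasure μ] (hindep : iIndepFun Y μ)
    (hmeas : ∀ i, Measurable (Y i)) (hint : ∀ i, Integrable (Y i) μ) (n : ℕ) :
    Integrable (∏ i ∈ range n, Y i) μ := by
  induction n with
  | zero => rw [prod_range_zero]; exact integrable_const 1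
  | succ n ih =>
    rw [prod_range_succ]
    exact (hindep.indepFun_prod_range_succ hmeas n).integrable_mul ih (hint n)

lemma iIndepFun.indep_comap_succ_natural (hindep : iIndepFun Y μ)
    (hmeas : ∀ i, Measurable (Y i)) (n : ℕ) :
    Indep (MeasurableSpace.comap (Y (n + 1)) inferInstance)
      (Filtration.natural Y (fun i ↦ (hmeas i).stronglyMeasurable) n) μ := by
  have h := indep_iSup_of_disjoint (fun i ↦ (hmeas i).comap_le)
    ((iIndepFun_iff_iIndep _ _ _).1 hindep)
    (Set.disjoint_singleton_left.2 (by simp : n + 1 ∉ Set.Iic n))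
  rwa [_root_.iSup_singleton] at h

theorem iIndepFun.martingale_prod_range_succ [IsProbabilityMeasure μ] (hindep : iIndepFun Y μ)
    (hmeas : ∀ i, Measurable (Y i)) (hint : ∀ i, Integrable (Y i) μ)
    (hmean : ∀ i, μ[Y i] = 1) :
    Martingale (fun n ↦ ∏ i ∈ range (n + 1), Y i)
      (Filtration.natural Y (fun i ↦ (hmeas i).stronglyMeasurable)) μ := by
  set ℱ := Filtration.natural Y (fun i ↦ (hmeas i).stronglyMeasurable)
  have hadapted : StronglyAdapted ℱ (fun n ↦ ∏ i ∈ range (n + 1), Y i) := fun n ↦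
    Finset.stronglyMeasurable_prod _ fun i hi ↦
      (Filtration.stronglyAdapted_natural _ i).mono (ℱ.mono (Nat.lt_succ_iff.1 (mem_range.1 hi)))
  refine martingale_nat hadapted (fun n ↦ hindep.integrable_prod_range hmeas hint _) fun n ↦ ?_
  have hY : μ[Y (n + 1) | ℱ n] =ᵐ[μ] fun _ ↦ 1 := by
    rw [← hmean (n + 1)]
    exact condExp_indep_eq (hmeas _).comap_le (ℱ.le n)
      (comap_measurable (Y (n + 1))).stronglyMeasurable (hindep.indep_comap_succ_natural hmeas n)
  have hint_succ := hindep.integrable_prod_range hmeas hint (n + 2)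
  rw [prod_range_succ] at hint_succ
  rw [prod_range_succ _ (n + 1)]
  refine EventuallyEq.symm ?_
  filter_upwards [condExp_mul_of_stronglyMeasurable_left (hadapted n) hint_succ (hint _), hY]
    with ω h1 h2
  simp [h1, h2]

end ProbabilityTheory

namespace MeasureTheory

variable {Ω : Type*} {mΩ : MeasurableSpace Ω} {μ : Measure Ω}

/-- Ville's inequality. -/
theorem Martingale.measure_exists_ge_le_ofReal_integral_div [IsFiniteMeasure μ]
    {ℱ : Filtration ℕ mΩ} {f : ℕ → Ω → ℝ} (hf : Martingale f ℱ μ) (hnonneg : 0 ≤ f)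
    {ε : ℝ} (hε : 0 < ε) :
    μ {ω | ∃ n, ε ≤ f n ω} ≤ ENNReal.ofReal (μ[f 0] / ε) := by
  set A : ℕ → Set Ω := fun n ↦
    {ω | ε ≤ (range (n + 1)).sup' nonempty_range_add_one fun k ↦ f k ω}
  have hA : {ω | ∃ n, ε ≤ f n ω} = ⋃ n, A n := by
    ext ω
    simp only [Set.mem_ofPred_eq, Set.mem_iUnion, A, le_sup'_iff, mem_range]
    exact ⟨fun ⟨n, hn⟩ ↦ ⟨n, n, n.lt_succ_self, hn⟩, fun ⟨_, k, _, hk⟩ ↦ ⟨k, hk⟩⟩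
  have hA_mono : Monotone A := fun m n hmn ω (hω : ε ≤ _) ↦ show ε ≤ _ from
    hω.trans (sup'_mono _ (range_subset_range.2 (Nat.succ_le_succ hmn)) _)
  have hbound : ∀ n, μ (A n) ≤ ENNReal.ofReal (μ[f 0] / ε) := by
    intro n
    have hdoob := maximal_ineq hf.submartingale hnonneg (ε := ε.toNNReal) n
    rw [Real.coe_toNNReal _ hε.le] at hdoob
    have hint : ∫ ω in A n, f n ω ∂μ ≤ μ[f 0] := by
      have hconst := hf.setIntegral_eq n.zero_le MeasurableSet.univ
      rw [setIntegral_univ, setIntegral_univ] at hconst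
      rw [hconst]
      exact setIntegral_le_integral (hf.integrable n) (Eventually.of_forall (hnonneg n))
    rw [ENNReal.ofReal_div_of_pos hε, ENNReal.le_div_iff_mul_le (by simp [hε]) (by simp), mul_comm]
    exact hdoob.trans (ENNReal.ofReal_le_ofReal hint)
  rw [hA, hA_mono.measure_iUnion]
  exact iSup_le hbound

end MeasureTheory

section RandomWalk

open Real

variable {Ω : Type*} {mΩ : MeasurableSpace Ω} {μ : Measure Ω} [IsProbabilityMeasure μ]
  {X : ℕ → Ω → ℝ}

theorem measure_exists_le_sum_range_le_exp (hmeas : ∀ i, Measurable (X i))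
    (hindep : iIndepFun X μ) (hident : ∀ i, IdentDistrib (X i) (X 0) μ μ) {t : ℝ} (ht : 0 ≤ t)
    (hint : Integrable (fun ω ↦ exp (t * X 0 ω)) μ) (hmgf : mgf (X 0) μ t ≤ 1) (x : ℝ) :
    μ {ω | ∃ n ≥ 1, x ≤ ∑ i ∈ range n, X i ω} ≤ ENNReal.ofReal (exp (-t * x)) := by
  set m := mgf (X 0) μ t
  have hm : 0 < m := mgf_pos hint
  set Y : ℕ → Ω → ℝ := fun i ω ↦ exp (t * X i ω) / m
  have hY_meas : ∀ i, Measurable (Y i) := fun i ↦ by fun_prop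
  have hY_indep : iIndepFun Y μ := hindep.comp (fun _ z ↦ exp (t * z) / m) fun _ ↦ by fun_prop
  have hexp_ident : ∀ i, IdentDistrib (fun ω ↦ exp (t * X i ω)) (fun ω ↦ exp (t * X 0 ω)) μ μ :=
    fun i ↦ (hident i).comp (measurable_const_mul t).exp
  have hY_int : ∀ i, Integrable (Y i) μ := fun i ↦
    ((hexp_ident i).integrable_iff.2 hint).div_const m
  have hY_mean : ∀ i, μ[Y i] = 1 := fun i ↦ by
    rw [integral_div, (hexp_ident i).integral_eq]
    exact div_self hm.ne'
  have hM := hY_indep.martingale_prod_range_succ hY_meas hY_int hY_mean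
  have hM_nonneg : 0 ≤ fun n ↦ ∏ i ∈ range (n + 1), Y i := fun n ω ↦ by
    simp only [Pi.zero_apply, prod_apply]
    exact prod_nonneg fun i _ ↦ by positivity
  have hsubset : {ω | ∃ n ≥ 1, x ≤ ∑ i ∈ range n, X i ω} ⊆
      {ω | ∃ n, exp (t * x) ≤ (∏ i ∈ range (n + 1), Y i) ω} := by
    rintro ω ⟨_ | n, hn, hx⟩
    · omega
    refine ⟨n, ?_⟩
    calc exp (t * x) ≤ exp (t * ∑ i ∈ range (n + 1), X i ω) := by gcongr
      _ = ∏ i ∈ range (n + 1), exp (t * X i ω) := by rw [mul_sum, exp_sum]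
      _ ≤ (∏ i ∈ range (n + 1), Y i) ω := by
        rw [prod_apply]
        exact prod_le_prod (fun i _ ↦ (exp_pos _).le)
          fun i _ ↦ le_div_self (exp_pos _).le hm hmgf
  calc μ {ω | ∃ n ≥ 1, x ≤ ∑ i ∈ range n, X i ω}
      ≤ ENNReal.ofReal (μ[∏ i ∈ range 1, Y i] / exp (t * x)) :=
        (measure_mono hsubset).trans (hM.measure_exists_ge_le_ofReal_integral_div hM_nonneg
          (exp_pos _))
    _ = ENNReal.ofReal (exp (-t * x)) := by
        rw [prod_range_one, hY_mean, one_div, ← exp_neg, neg_mul]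

end RandomWalk

theorem lundberg_bound_general {Ω : Type*} [MeasurableSpace Ω]
    (μ : Measure Ω) [IsProbabilityMeasure μ]
    (X : ℕ → Ω → ℝ) (hmeas : ∀ i, Measurable (X i))
    (hindep : iIndepFun X μ)
    (hident : ∀ i, IdentDistrib (X i) (X 0) μ μ)
    (ν : ℝ)
    (hν : ν = sSup {t : ℝ | Integrable (fun ω => Real.exp (t * X 0 ω)) μ ∧
      ∫ ω, Real.exp (t * X 0 ω) ∂μ ≤ 1})
    (hνpos : 0 < ν) (x : ℝ) :
    μ {ω | ∃ n ≥ 1, x ≤ ∑ i ∈ Finset.range n, X i ω} ≤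
      ENNReal.ofReal (Real.exp (-ν * x)) := by
  set S := {t : ℝ | Integrable (fun ω => Real.exp (t * X 0 ω)) μ ∧
      ∫ ω, Real.exp (t * X 0 ω) ∂μ ≤ 1}
  have hS_nonempty : S.Nonempty := ⟨0, by simp [S]⟩
  have hS_bdd : BddAbove S := by
    by_contra h
    rw [Real.sSup_of_not_bddAbove h] at hν
    exact hνpos.ne' hν
  obtain ⟨u, -, hu_lim, hu_mem⟩ := exists_seq_tendsto_sSup hS_nonempty hS_bdd
  rw [← hν] at hu_lim
  have hbound : ∀ᶠ k in atTop, μ {ω | ∃ n ≥ 1, x ≤ ∑ i ∈ range n, X i ω} ≤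
      ENNReal.ofReal (Real.exp (-u k * x)) :=
    (hu_lim.eventually (lt_mem_nhds hνpos)).mono fun k hk ↦
      measure_exists_le_sum_range_le_exp hmeas hindep hident hk.le (hu_mem k).1 (hu_mem k).2 x
  have hcont : Continuous fun s : ℝ ↦ ENNReal.ofReal (Real.exp (-s * x)) :=
    ENNReal.continuous_ofReal.comp (by fun_prop)
  exact ge_of_tendsto ((hcont.tendsto ν).comp hu_lim) hbound

/-- Lundberg exponential bound: for a random walk with i.i.d. increments of negative mean,
`P(sup_{n ≥ 1} S_n ≥ x) ≤ exp(-ν x)` where `ν = sup{t : E[e^{tX}] ≤ 1} > 0`. -/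
theorem lundberg_bound {Ω : Type*} [MeasurableSpace Ω]
    (μ : Measure Ω) [IsProbabilityMeasure μ]
    (X : ℕ → Ω → ℝ) (hmeas : ∀ i, Measurable (X i))
    (hindep : iIndepFun X μ)
    (hident : ∀ i, IdentDistrib (X i) (X 0) μ μ)
    (hint : Integrable (X 0) μ) (hmean : ∫ ω, X 0 ω ∂μ < 0)
    (ν : ℝ)
    (hν : ν = sSup {t : ℝ | Integrable (fun ω => Real.exp (t * X 0 ω)) μ ∧
      ∫ ω, Real.exp (t * X 0 ω) ∂μ ≤ 1})
    (hνpos : 0 < ν) (x : ℝ) (hx : 0 ≤ x) :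
    μ {ω | ∃ n ≥ 1, x ≤ ∑ i ∈ Finset.range n, X i ω} ≤
      ENNReal.ofReal (Real.exp (-ν * x)) :=
  lundberg_bound_general μ X hmeas hindep hident ν hν hνpos x
end

section
/- Let Λ: R^d → [0,∞) be convex. Suppose for some g ∈ R^d and u_G > 0, for each u in an interval (u_G − δ, u_G + δ) there is a point β(u) in the hyperplane (1/u)·H achieving the minimum of Λ over the half-space (1/u)·Ĥ, where H = ∂Ĥ is a hyperplane and Ĥ the corresponding closed half-space. Then the function u ↦ u·Λ(β(u)) is convex on (u_G − δ, u_G + δ). -/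
/-! Since `u • β u` lies in the convex half-space `Ĥ`, the average
`u₀⁻¹ • (a • x • β x + b • y • β y)`, `u₀ = a x + b y`, is admissible at `u₀`, so
`u₀ Λ(β u₀)` is at most the value there of the perspective `(u, v) ↦ u Λ(u⁻¹ v)`.
The perspective of a convex function is jointly convex, which bounds that value by
`a x Λ(β x) + b y Λ(β y)`. -/

open scoped RealInnerProductSpace Pointwise

open Set

section Perspective

variable {E : Type*} [AddCommGroup E] [Module ℝ E] {f : E → ℝ}

theorem ConvexOn.perspective (hf : ConvexOn ℝ univ f) :
    ConvexOn ℝ (Ioi 0 ×ˢ univ) (fun z : ℝ × E => z.1 * f (z.1⁻¹ • z.2)) := by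
  refine ⟨(convex_Ioi 0).prod convex_univ, ?_⟩
  rintro ⟨x, p⟩ ⟨hx : 0 < x, -⟩ ⟨y, q⟩ ⟨hy : 0 < y, -⟩ a b ha hb hab
  simp only [Prod.smul_mk, Prod.fst_add, Prod.snd_add, smul_eq_mul]
  have hu : 0 < a * x + b * y := convex_Ioi (0 : ℝ) hx hy ha hb hab
  set u := a * x + b * y
  have hweights : a * x / u + b * y / u = 1 := by rw [← add_div, div_self hu.ne']
  have hpoint : u⁻¹ • (a • p + b • q) = (a * x / u) • (x⁻¹ • p) + (b * y / u) • (y⁻¹ • q) := by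
    simp only [smul_smul, smul_add]
    congr 2 <;> field_simp
  have hjensen := hf.2 (mem_univ (x⁻¹ • p)) (mem_univ (y⁻¹ • q)) (by positivity) (by positivity)
    hweights
  rw [← hpoint, smul_eq_mul, smul_eq_mul] at hjensen
  calc u * f (u⁻¹ • (a • p + b • q))
      ≤ u * (a * x / u * f (x⁻¹ • p) + b * y / u * f (y⁻¹ • q)) := by gcongr
    _ = a * (x * f (x⁻¹ • p)) + b * (y * f (y⁻¹ • q)) := by field_simp

theorem ConvexOn.convexOn_mul_of_isMinOn_inv_smul (hf : ConvexOn ℝ univ f) {A : Set E}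
    (hA : Convex ℝ A) {s : Set ℝ} (hs : Convex ℝ s) (hs_pos : s ⊆ Ioi 0) {β : ℝ → E}
    (hβA : ∀ u ∈ s, β u ∈ u⁻¹ • A) (hβmin : ∀ u ∈ s, IsMinOn f (u⁻¹ • A) (β u)) :
    ConvexOn ℝ s (fun u => u * f (β u)) := by
  have hscaled : ∀ u ∈ s, u • β u ∈ A := fun u hu =>
    (mem_inv_smul_set_iff₀ (hs_pos hu).ne' _ _).1 (hβA u hu)
  refine ⟨hs, fun x hx y hy a b ha hb hab => ?_⟩
  have hu := hs hx hy ha hb hab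
  set u := a • x + b • y
  set w := a • (x • β x) + b • (y • β y)
  have hu0 : u ≠ 0 := (hs_pos hu).ne'
  have hmin : f (β u) ≤ f (u⁻¹ • w) := hβmin u hu <|
    (mem_inv_smul_set_iff₀ hu0 _ _).2 <| by
      rw [smul_inv_smul₀ hu0]
      exact hA (hscaled x hx) (hscaled y hy) ha hb hab
  have hpersp := hf.perspective.2 (mk_mem_prod (hs_pos hx) (mem_univ (x • β x)))
    (mk_mem_prod (hs_pos hy) (mem_univ (y • β y))) ha hb hab
  simp only [Prod.smul_mk, Prod.mk_add_mk] at hpersp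
  rw [inv_smul_smul₀ (hs_pos hx).ne', inv_smul_smul₀ (hs_pos hy).ne'] at hpersp
  calc u * f (β u) ≤ u * f (u⁻¹ • w) := by gcongr; exact (hs_pos hu).le
    _ ≤ _ := hpersp

end Perspective

theorem halfspace_value_convex_general {d : ℕ}
    (Λ : EuclideanSpace ℝ (Fin d) → ℝ)
    (hconv : ConvexOn ℝ Set.univ Λ)
    (N : EuclideanSpace ℝ (Fin d))
    (c : ℝ)
    (uG δ : ℝ) (hpos : 0 < uG - δ)
    (β : ℝ → EuclideanSpace ℝ (Fin d))
    (hβH : ∀ u ∈ Set.Ioo (uG - δ) (uG + δ), ⟪β u, N⟫ = c / u)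
    (hβmin : ∀ u ∈ Set.Ioo (uG - δ) (uG + δ), ∀ v, c / u ≤ ⟪v, N⟫ → Λ (β u) ≤ Λ v) :
    ConvexOn ℝ (Set.Ioo (uG - δ) (uG + δ)) (fun u => u * Λ (β u)) := by
  have hI_pos : Ioo (uG - δ) (uG + δ) ⊆ Ioi 0 := fun u hu => hpos.trans hu.1
  have hmem : ∀ u ∈ Ioo (uG - δ) (uG + δ), ∀ v,
      v ∈ u⁻¹ • {w | c ≤ ⟪w, N⟫} ↔ c / u ≤ ⟪v, N⟫ := fun u hu v => by
    have hu0 : 0 < u := hI_pos hu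
    rw [mem_inv_smul_set_iff₀ hu0.ne', mem_ofPred_eq, real_inner_smul_left, div_le_iff₀ hu0,
      mul_comm]
  refine hconv.convexOn_mul_of_isMinOn_inv_smul
    (convex_halfSpace_ge (isBoundedBilinearMap_inner.isBoundedLinearMap_left N).toIsLinearMap c)
    (convex_Ioo _ _) hI_pos (fun u hu => ?_) (fun u hu v hv => hβmin u hu v ((hmem u hu v).1 hv))
  rw [hmem u hu, hβH u hu]

/-- If for each `u` near `u_G` the point `β(u)` on the hyperplane `(1/u)H` minimizes the
convex rate function `Λ` over the half-space `(1/u)Ĥ`, then `u ↦ u·Λ(β(u))` is convex. -/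
theorem halfspace_value_convex {d : ℕ}
    (Λ : EuclideanSpace ℝ (Fin d) → ℝ)
    (hnn : ∀ v, 0 ≤ Λ v) (hconv : ConvexOn ℝ Set.univ Λ)
    (N : EuclideanSpace ℝ (Fin d)) (hN : N ≠ 0)
    (c : ℝ) (hc : c ≠ 0)
    (uG δ : ℝ) (hδ : 0 < δ) (hpos : 0 < uG - δ)
    (β : ℝ → EuclideanSpace ℝ (Fin d))
    (hβH : ∀ u ∈ Set.Ioo (uG - δ) (uG + δ), ⟪β u, N⟫ = c / u)
    (hβmin : ∀ u ∈ Set.Ioo (uG - δ) (uG + δ), ∀ v, c / u ≤ ⟪v, N⟫ → Λ (β u) ≤ Λ v) :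
    ConvexOn ℝ (Set.Ioo (uG - δ) (uG + δ)) (fun u => u * Λ (β u)) :=
  halfspace_value_convex_general Λ hconv N c uG δ hpos β hβH hβmin
end
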